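/- arXiv:1505.05067 — 2 statements merged into one kernel-verified Lean document; each statement's English description precedes it below -/
import Mathlib

section
/- Let g(t) be an invertible formal power series (nonzero constant term) and f(t) a delta series (order exactly 1). Then there exists a unique sequence of polynomials S_{n,q}(x) with deg S_{n,q} = n satisfying ⟨g(t) f(t)^k | S_{n,q}(x)⟩ = [n]_q! δ_{n,k} for all n, k ≥ 0. -/
/-! The pairing matrix `⟨g f^k | x^m⟩ = [x^m] (g f^k) · [m]_q!` is triangular with nonzero
diagonal, because `g f^k` has order exactly `k`. So a nonzero polynomial of degree `m` pairs
nontrivially with `g f^m`, which gives uniqueness; and on polynomials of degree `≤ n` the map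
`p ↦ (⟨g f^k | p⟩)_{k ≤ n}` is an injective endomorphism of an `(n+1)`-dimensional space, hence
surjective, which gives existence. -/

open Finset

/-- The q-number `[n]_q = (1 - q^n)/(1 - q)`. -/
noncomputable def qNum (q : ℂ) (n : ℕ) : ℂ := (1 - q ^ n) / (1 - q)

/-- The q-factorial `[n]_q! = [1]_q [2]_q ⋯ [n]_q`, with `[0]_q! = 1`. -/
noncomputable def qFact (q : ℂ) : ℕ → ℂ
  | 0 => 1
  | n + 1 => qFact q n * qNum q (n + 1)

/-- The Gaussian (q-binomial) coefficient `[n choose k]_q = [n]_q!/([k]_q! [n-k]_q!)`. -/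
noncomputable def qBinom (q : ℂ) (n k : ℕ) : ℂ := qFact q n / (qFact q k * qFact q (n - k))
/-- The q-umbral pairing: for `f(t) = ∑ (a_k/[k]_q!) t^k` and a polynomial `p`,
`⟨f(t) | p(x)⟩ = ∑_n p_n a_n`, where `a_n = (coeff n f) · [n]_q!`. -/
noncomputable def qPair (q : ℂ) (f : PowerSeries ℂ) (p : Polynomial ℂ) : ℂ :=
  p.sum fun n c => c * (PowerSeries.coeff (R := ℂ) n f * qFact q n)

open Polynomial

lemma natDegree_le_of_mem_degreeLT_succ {R : Type*} [Semiring R] {n : ℕ} {p : R[X]}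
    (hp : p ∈ degreeLT R (n + 1)) : p.natDegree ≤ n := by
  rw [degreeLT_succ_eq_degreeLE, mem_degreeLE] at hp
  exact natDegree_le_iff_degree_le.mpr hp

section QPair

variable (q : ℂ)

noncomputable def lqPair (h : PowerSeries ℂ) : ℂ[X] →ₗ[ℂ] ℂ :=
  lsum fun n => LinearMap.id.smulRight (PowerSeries.coeff n h * qFact q n)

@[simp]
lemma lqPair_apply (h : PowerSeries ℂ) (p : ℂ[X]) : lqPair q h p = qPair q h p := rfl

variable {q}

lemma qPair_eq_coeff_mul_of_natDegree_le {h : PowerSeries ℂ} {m : ℕ}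
    (hm : (m : ℕ∞) ≤ h.order) {p : ℂ[X]} (hp : p.natDegree ≤ m) :
    qPair q h p = p.coeff m * (PowerSeries.coeff m h * qFact q m) := by
  rw [qPair, sum_over_range' p (f := fun n c => c * (PowerSeries.coeff n h * qFact q n))
    (fun _ => zero_mul _) (m + 1) (Nat.lt_succ_of_le hp),
    Finset.sum_range_succ, add_eq_right]
  refine Finset.sum_eq_zero fun i hi => ?_
  rw [PowerSeries.coeff_of_lt_order i (lt_of_lt_of_le (by exact_mod_cast mem_range.mp hi) hm)]
  ring

lemma qPair_eq_zero_of_natDegree_lt {h : PowerSeries ℂ} {m : ℕ} (hm : (m : ℕ∞) ≤ h.order)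
    {p : ℂ[X]} (hp : p.natDegree < m) : qPair q h p = 0 := by
  rw [qPair_eq_coeff_mul_of_natDegree_le hm hp.le, coeff_eq_zero_of_natDegree_lt hp, zero_mul]

variable {h : ℕ → PowerSeries ℂ}

lemma qPair_natDegree_ne_zero (hh : ∀ k, (h k).order = k) (hq : ∀ n, qFact q n ≠ 0)
    {p : ℂ[X]} (hp : p ≠ 0) : qPair q (h p.natDegree) p ≠ 0 := by
  rw [qPair_eq_coeff_mul_of_natDegree_le (hh _).ge le_rfl]
  exact mul_ne_zero (leadingCoeff_ne_zero.mpr hp)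
    (mul_ne_zero (PowerSeries.order_eq_nat.mp (hh _)).1 (hq _))

lemma exists_natDegree_le_qPair_eq (hh : ∀ k, (h k).order = k) (hq : ∀ n, qFact q n ≠ 0)
    (n : ℕ) (c : Fin (n + 1) → ℂ) :
    ∃ p : ℂ[X], p.natDegree ≤ n ∧ ∀ k : Fin (n + 1), qPair q (h k) p = c k := by
  let Φ : (Fin (n + 1) → ℂ) →ₗ[ℂ] Fin (n + 1) → ℂ :=
    (LinearMap.pi fun k : Fin (n + 1) => (lqPair q (h k)).comp (degreeLT ℂ (n + 1)).subtype).comp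
      (degreeLTEquiv ℂ (n + 1)).symm.toLinearMap
  have hΦ : Function.Injective Φ := by
    refine (injective_iff_map_eq_zero Φ).mpr fun v hv => ?_
    set p := (degreeLTEquiv ℂ (n + 1)).symm v
    suffices (p : ℂ[X]) = 0 by simpa [p] using this
    by_contra hp
    have hdeg := natDegree_le_of_mem_degreeLT_succ p.2
    exact qPair_natDegree_ne_zero hh hq hp
      (congrFun hv ⟨(p : ℂ[X]).natDegree, Nat.lt_succ_of_le hdeg⟩)
  obtain ⟨v, hv⟩ := LinearMap.injective_iff_surjective.mp hΦ c
  exact ⟨_, natDegree_le_of_mem_degreeLT_succ ((degreeLTEquiv ℂ (n + 1)).symm v).2,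
    fun k => congrFun hv k⟩

lemma eq_of_forall_qPair_eq (hh : ∀ k, (h k).order = k) (hq : ∀ n, qFact q n ≠ 0)
    {p p' : ℂ[X]} (hpp' : ∀ k, qPair q (h k) p = qPair q (h k) p') : p = p' := by
  by_contra hne
  apply qPair_natDegree_ne_zero hh hq (sub_ne_zero.mpr hne)
  rw [← lqPair_apply, map_sub, lqPair_apply, lqPair_apply, hpp', sub_self]

theorem existsUnique_qPair_eq_ite (hh : ∀ k, (h k).order = k) (hq : ∀ n, qFact q n ≠ 0) :
    ∃! S : ℕ → ℂ[X], (∀ n, (S n).degree = n) ∧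
      ∀ n k, qPair q (h k) (S n) = if n = k then qFact q n else 0 := by
  choose S hSdeg hS using fun n =>
    exists_natDegree_le_qPair_eq hh hq n fun k => if n = (k : ℕ) then qFact q n else 0
  have hpair : ∀ n k, qPair q (h k) (S n) = if n = k then qFact q n else 0 := by
    intro n k
    rcases lt_or_ge n k with hnk | hkn
    · rw [if_neg hnk.ne, qPair_eq_zero_of_natDegree_lt (hh k).ge ((hSdeg n).trans_lt hnk)]
    · exact hS n ⟨k, Nat.lt_succ_of_le hkn⟩
  refine ⟨S, ⟨fun n => ?_, hpair⟩, fun T ⟨_, hT⟩ => funext fun n =>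
    eq_of_forall_qPair_eq hh hq fun k => by rw [hT, hpair]⟩
  have hlead := hpair n n
  rw [if_pos rfl, qPair_eq_coeff_mul_of_natDegree_le (hh n).ge (hSdeg n)] at hlead
  exact degree_eq_of_le_of_coeff_ne_zero (degree_le_of_natDegree_le (hSdeg n))
    (left_ne_zero_of_mul (hlead ▸ hq n))

end QPair

lemma PowerSeries.order_mul_pow_eq {R : Type*} [Semiring R] [NoZeroDivisors R] [Nontrivial R]
    {g f : PowerSeries R} (hg : PowerSeries.coeff 0 g ≠ 0) (hf0 : PowerSeries.coeff 0 f = 0)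
    (hf1 : PowerSeries.coeff 1 f ≠ 0) (k : ℕ) : (g * f ^ k).order = k := by
  have hg0 : g.order = 0 :=
    PowerSeries.order_eq_nat.mpr ⟨hg, fun _ hi => absurd hi (Nat.not_lt_zero _)⟩
  have hf : f.order = 1 :=
    PowerSeries.order_eq_nat.mpr ⟨hf1, fun i hi => by rwa [Nat.lt_one_iff.mp hi]⟩
  rw [PowerSeries.order_mul, PowerSeries.order_pow, hg0, hf, zero_add, nsmul_one]

/-- Existence and uniqueness of the q-Sheffer sequence for an invertible series g
and a delta series f. -/
theorem qSheffer_existsUnique (q : ℂ) (hq : ∀ n, qFact q n ≠ 0)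
    (g f : PowerSeries ℂ) (hg : PowerSeries.coeff (R := ℂ) 0 g ≠ 0)
    (hf0 : PowerSeries.coeff (R := ℂ) 0 f = 0) (hf1 : PowerSeries.coeff (R := ℂ) 1 f ≠ 0) :
    ∃! S : ℕ → Polynomial ℂ, (∀ n, (S n).degree = n) ∧
      ∀ n k, qPair q (g * f ^ k) (S n) = if n = k then qFact q n else 0 :=
  existsUnique_qPair_eq_ite (PowerSeries.order_mul_pow_eq hg hf0 hf1) hq
end

section
/- A sequence {A_{n,q}(x)} is q-Appell for g(t) if and only if A_{n,q}(x) = g(t)^{-1} x^n, where g(t)^{-1} acts as a linear operator on polynomials via f(t) x^n = ∑_{k=0}^n [n choose k]_q a_k x^{n-k} for f(t) = ∑_k (a_k/[k]_q!) t^k. -/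
open Finset

/-- A power series f(t) = ∑ (a_k/[k]_q!) t^k acting as a linear operator on
polynomials: f(t) x^n = ∑_{k=0}^n [n choose k]_q a_k x^{n-k}, extended linearly. -/
noncomputable def qOp (q : ℂ) (f : PowerSeries ℂ) (p : Polynomial ℂ) : Polynomial ℂ :=
  p.sum fun n c => Polynomial.C c *
    ∑ k ∈ Finset.range (n + 1),
      Polynomial.C (qBinom q n k * (PowerSeries.coeff (R := ℂ) k f * qFact q k)) *
        Polynomial.X ^ (n - k)

/-!
Pairing `g(t) t^k` against `g(t)⁻¹ x^n` collapses, through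
`[n choose j]_q [j]_q! [n-j]_q! = [n]_q!`, to `[n]_q!` times the coefficient of `t^n` in
`g⁻¹ g t^k = t^k`; so `g(t)⁻¹ x^n` is q-Appell. Conversely, a polynomial `p` with
`⟨g(t) t^k | p⟩ = 0` for all `k` vanishes: for `k = deg p` the pairing is the leading coefficient
of `p` times `g(0) [deg p]_q!`. Hence any q-Appell sequence for `g` agrees with `g(t)⁻¹ x^n`.
-/

section

variable {q : ℂ}

noncomputable def qPairₗ (q : ℂ) (f : PowerSeries ℂ) : Polynomial ℂ →ₗ[ℂ] ℂ :=
  Polynomial.lsum fun n => LinearMap.mulRight ℂ (PowerSeries.coeff n f * qFact q n)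

theorem qPairₗ_apply (f : PowerSeries ℂ) (p : Polynomial ℂ) : qPairₗ q f p = qPair q f p :=
  rfl

theorem qPair_sub (f : PowerSeries ℂ) (p r : Polynomial ℂ) :
    qPair q f (p - r) = qPair q f p - qPair q f r := by
  simp only [← qPairₗ_apply, map_sub]

theorem qPair_sum {ι : Type*} (f : PowerSeries ℂ) (s : Finset ι) (P : ι → Polynomial ℂ) :
    qPair q f (∑ i ∈ s, P i) = ∑ i ∈ s, qPair q f (P i) := by
  simp only [← qPairₗ_apply, map_sum]

theorem qPair_C_mul_X_pow (f : PowerSeries ℂ) (a : ℂ) (m : ℕ) :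
    qPair q f (Polynomial.C a * Polynomial.X ^ m) = a * (PowerSeries.coeff m f * qFact q m) := by
  rw [qPair, Polynomial.C_mul_X_pow_eq_monomial]
  exact Polynomial.sum_monomial_index _ _ (zero_mul _)

theorem qOp_X_pow (f : PowerSeries ℂ) (n : ℕ) : qOp q f (Polynomial.X ^ n) =
    ∑ k ∈ range (n + 1),
      Polynomial.C (qBinom q n k * (PowerSeries.coeff k f * qFact q k)) *
        Polynomial.X ^ (n - k) := by
  rw [qOp, Polynomial.X_pow_eq_monomial, Polynomial.sum_monomial_index _ _ (by simp), map_one,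
    one_mul]

theorem qBinom_mul_qFact_mul_qFact (hq : ∀ n, qFact q n ≠ 0) {n k : ℕ} :
    qBinom q n k * qFact q k * qFact q (n - k) = qFact q n := by
  rw [qBinom, mul_assoc, div_mul_cancel₀ _ (mul_ne_zero (hq k) (hq (n - k)))]

theorem qPair_qOp_X_pow (hq : ∀ n, qFact q n ≠ 0) (f h : PowerSeries ℂ) (n : ℕ) :
    qPair q h (qOp q f (Polynomial.X ^ n)) = qFact q n * PowerSeries.coeff n (f * h) := by
  rw [qOp_X_pow, qPair_sum, PowerSeries.coeff_mul,
    Finset.Nat.sum_antidiagonal_eq_sum_range_succ (fun i j => PowerSeries.coeff i f *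
      PowerSeries.coeff j h), Finset.mul_sum]
  refine Finset.sum_congr rfl fun k _ => ?_
  rw [qPair_C_mul_X_pow, ← qBinom_mul_qFact_mul_qFact hq (n := n) (k := k)]
  ring

theorem qPair_mul_X_pow_qOp_inv_X_pow (hq : ∀ n, qFact q n ≠ 0) {g : PowerSeries ℂ}
    (hg : PowerSeries.constantCoeff g ≠ 0) (n k : ℕ) :
    qPair q (g * PowerSeries.X ^ k) (qOp q g⁻¹ (Polynomial.X ^ n)) =
      if n = k then qFact q n else 0 := by
  rw [qPair_qOp_X_pow hq, ← mul_assoc, PowerSeries.inv_mul_cancel g hg, one_mul,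
    PowerSeries.coeff_X_pow]
  split_ifs <;> simp

theorem qPair_mul_X_pow_natDegree (f : PowerSeries ℂ) (p : Polynomial ℂ) :
    qPair q (f * PowerSeries.X ^ p.natDegree) p =
      p.leadingCoeff * (PowerSeries.coeff 0 f * qFact q p.natDegree) := by
  rw [qPair, Polynomial.sum_over_range' p (fun _ => by rw [zero_mul]) _ (lt_add_one _),
    sum_range_succ, sum_eq_zero fun m hm => ?_, zero_add, PowerSeries.coeff_mul_X_pow',
    if_pos le_rfl, Nat.sub_self, Polynomial.leadingCoeff]
  rw [PowerSeries.coeff_mul_X_pow', if_neg (by simpa using hm), zero_mul, mul_zero]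

theorem eq_zero_of_forall_qPair_mul_X_pow_eq_zero (hq : ∀ n, qFact q n ≠ 0)
    {g : PowerSeries ℂ} (hg : PowerSeries.coeff 0 g ≠ 0) {p : Polynomial ℂ}
    (h : ∀ k, qPair q (g * PowerSeries.X ^ k) p = 0) : p = 0 := by
  by_contra hp
  have := h p.natDegree
  rw [qPair_mul_X_pow_natDegree] at this
  exact mul_ne_zero (Polynomial.leadingCoeff_ne_zero.mpr hp) (mul_ne_zero hg (hq _)) this

end

/-- A sequence is q-Appell for g(t) iff A_n(x) = g(t)⁻¹ x^n as operators. -/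
theorem qAppell_iff_qOp_inv (q : ℂ) (hq : ∀ n, qFact q n ≠ 0)
    (g : PowerSeries ℂ) (hg : PowerSeries.coeff (R := ℂ) 0 g ≠ 0)
    (A : ℕ → Polynomial ℂ) :
    (∀ n k, qPair q (g * PowerSeries.X ^ k) (A n) =
        if n = k then qFact q n else 0) ↔
      ∀ n, A n = qOp q g⁻¹ (Polynomial.X ^ n) := by
  have hg' : PowerSeries.constantCoeff g ≠ 0 := by
    rwa [← PowerSeries.coeff_zero_eq_constantCoeff]
  have hAppell := qPair_mul_X_pow_qOp_inv_X_pow hq hg'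
  refine ⟨fun h n => sub_eq_zero.mp ?_, fun h n k => h n ▸ hAppell n k⟩
  exact eq_zero_of_forall_qPair_mul_X_pow_eq_zero hq hg fun k => by
    rw [qPair_sub, h n k, hAppell n k, sub_self]
end
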